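/- Fix m ∈ (0,1]. There exists a constant β > 0 (depending on A, a, Γ, and m) such that for every u ∈ ℝ^n with u > 0 entrywise, ‖u‖ = 1, and min_i u_i ≥ m, setting λ = λ(u) and letting (Δ, δ) solve the Newton system at (u,λ), one has β·‖Δ‖ ≤ δ. -/

import Mathlib

open Matrix Finset

noncomputable def enorm' {n : ℕ} (u : Fin n → ℝ) : ℝ := Real.sqrt (∑ i, u i ^ 2)

def IsZMatrix {n : ℕ} (B : Matrix (Fin n) (Fin n) ℝ) : Prop :=
  ∀ i j, i ≠ j → B i j ≤ 0

def IsIrreducibleMat {n : ℕ} (B : Matrix (Fin n) (Fin n) ℝ) : Prop :=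
  ¬ ∃ S : Finset (Fin n), S.Nonempty ∧ S ≠ Finset.univ ∧
    ∀ i ∈ S, ∀ j ∉ S, B i j = 0

def IsNonsingularM {n : ℕ} (B : Matrix (Fin n) (Fin n) ℝ) : Prop :=
  IsZMatrix B ∧ IsUnit B ∧ ∀ i j, 0 ≤ B⁻¹ i j

noncomputable def calA {n : ℕ} (A : Matrix (Fin n) (Fin n) ℝ) (Γ : ℝ) (a : Fin n → ℝ)
    (u : Fin n → ℝ) : Matrix (Fin n) (Fin n) ℝ :=
  A + Γ • Matrix.diagonal (fun i => 1 - 1 / (a i + u i ^ 2))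

noncomputable def rvec {n : ℕ} (A : Matrix (Fin n) (Fin n) ℝ) (Γ : ℝ) (a : Fin n → ℝ)
    (u : Fin n → ℝ) (lam : ℝ) : Fin n → ℝ :=
  calA A Γ a u *ᵥ u - lam • u

noncomputable def Jmat {n : ℕ} (A : Matrix (Fin n) (Fin n) ℝ) (Γ : ℝ) (a : Fin n → ℝ)
    (u : Fin n → ℝ) (lam : ℝ) : Matrix (Fin n) (Fin n) ℝ :=
  A + (Γ - lam) • (1 : Matrix (Fin n) (Fin n) ℝ)
    - Γ • Matrix.diagonal (fun i => (a i - u i ^ 2) / (a i + u i ^ 2) ^ 2)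

noncomputable def lamOf {n : ℕ} [NeZero n] (A : Matrix (Fin n) (Fin n) ℝ) (Γ : ℝ)
    (a : Fin n → ℝ) (u : Fin n → ℝ) : ℝ :=
  ⨅ i, (calA A Γ a u *ᵥ u) i / u i

def NewtonSystem {n : ℕ} (A : Matrix (Fin n) (Fin n) ℝ) (Γ : ℝ) (a : Fin n → ℝ)
    (u : Fin n → ℝ) (lam : ℝ) (Δ : Fin n → ℝ) (δ : ℝ) : Prop :=
  Jmat A Γ a u lam *ᵥ Δ - δ • u = -rvec A Γ a u lam ∧
  -(u ⬝ᵥ Δ) = -(1/2 * (u ⬝ᵥ u - 1))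

/-!
Write `J = J(u, λ(u))` and `r = r(u, λ(u))`. The choice of `λ(u)` makes `r ≥ 0`, and
`J u = r + 2Γ u³ / (a + u²)²`, so `J u ≥ c u` for a `c > 0` depending only on `a`, `Γ`, `m`.
A Z-matrix with `J u > 0` for some `u > 0` is monotone (`J x ≥ 0 → x ≥ 0`), hence invertible,
and `z = J⁻¹ u`, `y = J⁻¹ r` satisfy `0 ≤ z ≤ u / c`, `y ≥ 0`, `Δ = δ z - y`. The constraint
`u ⬝ Δ = 0` gives `δ (u ⬝ z) = u ⬝ y ≥ 0`, so `δ ≥ 0` and `m ‖y‖ ≤ u ⬝ y ≤ δ / c`; therefore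
`‖Δ‖ ≤ δ ‖z‖ + ‖y‖ ≤ δ (1 + 1 / m) / c`.
-/

namespace IsZMatrix

variable {n : ℕ} {B : Matrix (Fin n) (Fin n) ℝ} {v : Fin n → ℝ}

theorem mulVec_apply_nonpos (hB : IsZMatrix B) {w : Fin n → ℝ} (hw : 0 ≤ w) {i : Fin n}
    (hwi : w i = 0) : (B *ᵥ w) i ≤ 0 := by
  simp only [mulVec, dotProduct]
  refine sum_nonpos fun j _ => ?_
  rcases eq_or_ne i j with rfl | hij
  · simp [hwi]
  · exact mul_nonpos_of_nonpos_of_nonneg (hB i j hij) (hw j)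

theorem nonneg_of_mulVec_nonneg (hB : IsZMatrix B) (hv : ∀ i, 0 < v i)
    (hBv : ∀ i, 0 < (B *ᵥ v) i) {x : Fin n → ℝ} (hx : 0 ≤ B *ᵥ x) : 0 ≤ x := by
  intro i
  -- `t • v` is the largest multiple of `v` below `x`; where `x - t • v` vanishes, the sign
  -- pattern of `B` forces `(B *ᵥ x) i₀ ≤ t * (B *ᵥ v) i₀`, so `t ≥ 0`.
  obtain ⟨i₀, -, hi₀⟩ := univ.exists_min_image (fun j => x j / v j) ⟨i, mem_univ i⟩
  set t := x i₀ / v i₀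
  have hw : 0 ≤ x - t • v := fun j => by
    have := (le_div_iff₀ (hv j)).1 (hi₀ j (mem_univ j))
    simp only [Pi.zero_apply, Pi.sub_apply, Pi.smul_apply, smul_eq_mul]
    linarith
  have hwi₀ : (x - t • v) i₀ = 0 := by
    simp [t, div_mul_cancel₀ _ (hv i₀).ne']
  have ht : 0 ≤ t := by
    have := hB.mulVec_apply_nonpos hw hwi₀
    rw [mulVec_sub, mulVec_smul] at this
    simp only [Pi.sub_apply, Pi.smul_apply, smul_eq_mul] at this
    exact nonneg_of_mul_nonneg_left (by linarith [show 0 ≤ (B *ᵥ x) i₀ from hx i₀]) (hBv i₀)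
  have := hw i
  simp only [Pi.zero_apply, Pi.sub_apply, Pi.smul_apply, smul_eq_mul, sub_nonneg] at this
  exact (mul_nonneg ht (hv i).le).trans this

theorem le_of_mulVec_le (hB : IsZMatrix B) (hv : ∀ i, 0 < v i) (hBv : ∀ i, 0 < (B *ᵥ v) i)
    {x y : Fin n → ℝ} (hxy : B *ᵥ x ≤ B *ᵥ y) : x ≤ y :=
  sub_nonneg.1 <| hB.nonneg_of_mulVec_nonneg hv hBv <| by
    rw [mulVec_sub]
    exact sub_nonneg.2 hxy

theorem mulVec_bijective (hB : IsZMatrix B) (hv : ∀ i, 0 < v i)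
    (hBv : ∀ i, 0 < (B *ᵥ v) i) : Function.Bijective B.mulVec := by
  have hinj : Function.Injective B.mulVec := fun x y h =>
    le_antisymm (hB.le_of_mulVec_le hv hBv h.le) (hB.le_of_mulVec_le hv hBv h.ge)
  exact ⟨hinj, mulVec_surjective_iff_isUnit.2 (mulVec_injective_iff_isUnit.1 hinj)⟩

end IsZMatrix

section FinVector

variable {n : ℕ}

theorem enorm'_eq_norm (x : Fin n → ℝ) : enorm' x = ‖WithLp.toLp 2 x‖ := by
  simp [enorm', EuclideanSpace.norm_eq]

theorem enorm'_smul (c : ℝ) (x : Fin n → ℝ) : enorm' (c • x) = |c| * enorm' x := by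
  simp only [enorm'_eq_norm, WithLp.toLp_smul, norm_smul, Real.norm_eq_abs]

theorem enorm'_sub_le (x y : Fin n → ℝ) : enorm' (x - y) ≤ enorm' x + enorm' y := by
  simpa only [enorm'_eq_norm, WithLp.toLp_sub] using norm_sub_le _ _

theorem enorm'_le_enorm' {x y : Fin n → ℝ} (hx : 0 ≤ x) (hxy : x ≤ y) :
    enorm' x ≤ enorm' y :=
  Real.sqrt_le_sqrt <| sum_le_sum fun i _ => pow_le_pow_left₀ (hx i) (hxy i) 2

theorem enorm'_le_sum {x : Fin n → ℝ} (hx : 0 ≤ x) : enorm' x ≤ ∑ i, x i :=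
  Real.sqrt_le_iff.2 ⟨sum_nonneg fun i _ => hx i, sum_sq_le_sq_sum_of_nonneg fun i _ => hx i⟩

theorem dotProduct_self_eq_enorm'_sq (x : Fin n → ℝ) : x ⬝ᵥ x = enorm' x ^ 2 := by
  rw [enorm', Real.sq_sqrt (by positivity)]
  simp [dotProduct, sq]

theorem mul_enorm'_le_dotProduct {m : ℝ} (hm : 0 ≤ m) {u y : Fin n → ℝ} (hum : ∀ i, m ≤ u i)
    (hy : 0 ≤ y) : m * enorm' y ≤ u ⬝ᵥ y :=
  calc m * enorm' y ≤ m * ∑ i, y i := mul_le_mul_of_nonneg_left (enorm'_le_sum hy) hm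
    _ = (fun _ => m) ⬝ᵥ y := by simp [dotProduct, mul_sum]
    _ ≤ u ⬝ᵥ y := dotProduct_le_dotProduct_of_nonneg_right hum hy

theorem dotProduct_pos_of_nonneg_of_ne_zero {u z : Fin n → ℝ} (hu : ∀ i, 0 < u i) (hz : 0 ≤ z)
    (hz0 : z ≠ 0) : 0 < u ⬝ᵥ z := by
  obtain ⟨i, hi⟩ := Function.ne_iff.1 hz0
  exact sum_pos' (fun j _ => mul_nonneg (hu j).le (hz j))
    ⟨i, mem_univ i, mul_pos (hu i) ((hz i).lt_of_ne' hi)⟩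

end FinVector

theorem IsZMatrix.mul_enorm'_le_of_mulVec_eq_smul_sub {n : ℕ} {J : Matrix (Fin n) (Fin n) ℝ}
    (hJ : IsZMatrix J) {u r Δ : Fin n → ℝ} {c m δ : ℝ} (hu1 : enorm' u = 1) (hm : 0 < m)
    (hum : ∀ i, m ≤ u i) (hr : 0 ≤ r) (hc : 0 < c) (hJu : c • u ≤ J *ᵥ u)
    (hJΔ : J *ᵥ Δ = δ • u - r) (huΔ : u ⬝ᵥ Δ = 0) :
    c * m / (m + 1) * enorm' Δ ≤ δ := by
  have hu : ∀ i, 0 < u i := fun i => hm.trans_le (hum i)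
  have hJu_pos : ∀ i, 0 < (J *ᵥ u) i := fun i => (mul_pos hc (hu i)).trans_le (hJu i)
  obtain ⟨hinj, hsurj⟩ := hJ.mulVec_bijective hu hJu_pos
  obtain ⟨z, hz⟩ := hsurj u
  obtain ⟨y, hy⟩ := hsurj r
  have hz0 : 0 ≤ z := hJ.nonneg_of_mulVec_nonneg hu hJu_pos fun i => by
    simpa [hz] using (hu i).le
  have hy0 : 0 ≤ y := hJ.nonneg_of_mulVec_nonneg hu hJu_pos (hy ▸ hr)
  have hzu : z ≤ c⁻¹ • u := hJ.le_of_mulVec_le hu hJu_pos <| by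
    rw [hz, mulVec_smul]
    calc u = c⁻¹ • c • u := (inv_smul_smul₀ hc.ne' u).symm
      _ ≤ c⁻¹ • J *ᵥ u := smul_le_smul_of_nonneg_left hJu (inv_nonneg.2 hc.le)
  have hΔ : Δ = δ • z - y := hinj <| by rw [hJΔ, mulVec_sub, mulVec_smul, hz, hy]
  have hbalance : δ * (u ⬝ᵥ z) = u ⬝ᵥ y := by
    rw [hΔ, dotProduct_sub, dotProduct_smul, smul_eq_mul, sub_eq_zero] at huΔ
    exact huΔ
  have huz_le : u ⬝ᵥ z ≤ c⁻¹ := by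
    have := dotProduct_le_dotProduct_of_nonneg_left hzu fun i => (hu i).le
    rwa [dotProduct_smul, dotProduct_self_eq_enorm'_sq, hu1, one_pow, smul_eq_mul, mul_one] at this
  have huz_pos : 0 < u ⬝ᵥ z := dotProduct_pos_of_nonneg_of_ne_zero hu hz0 <| by
    rintro rfl
    rw [mulVec_zero] at hz
    simp [← hz, enorm'] at hu1
  have hδ : 0 ≤ δ := nonneg_of_mul_nonneg_left
    (hbalance ▸ dotProduct_nonneg_of_nonneg (fun i => (hu i).le) hy0) huz_pos
  have hz_norm : enorm' z ≤ c⁻¹ :=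
    calc enorm' z ≤ enorm' (c⁻¹ • u) := enorm'_le_enorm' hz0 hzu
      _ = c⁻¹ := by rw [enorm'_smul, hu1, abs_of_pos (inv_pos.2 hc), mul_one]
  have hy_norm : m * enorm' y ≤ δ * c⁻¹ :=
    calc m * enorm' y ≤ u ⬝ᵥ y := mul_enorm'_le_dotProduct hm.le hum hy0
      _ = δ * (u ⬝ᵥ z) := hbalance.symm
      _ ≤ δ * c⁻¹ := mul_le_mul_of_nonneg_left huz_le hδ
  have hΔ_norm : enorm' Δ ≤ δ * c⁻¹ + δ * c⁻¹ / m :=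
    calc enorm' Δ ≤ δ * enorm' z + enorm' y := by
          simpa only [hΔ, enorm'_smul, abs_of_nonneg hδ] using enorm'_sub_le (δ • z) y
      _ ≤ δ * c⁻¹ + δ * c⁻¹ / m :=
          add_le_add (mul_le_mul_of_nonneg_left hz_norm hδ) ((le_div_iff₀' hm).2 hy_norm)
  calc c * m / (m + 1) * enorm' Δ ≤ c * m / (m + 1) * (δ * c⁻¹ + δ * c⁻¹ / m) := by gcongr
    _ = δ := by field_simp

section Newton

variable {n : ℕ} (A : Matrix (Fin n) (Fin n) ℝ) (a : Fin n → ℝ) (Γ : ℝ)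

theorem isZMatrix_Jmat (hA : IsZMatrix A) (u : Fin n → ℝ) (lam : ℝ) :
    IsZMatrix (Jmat A Γ a u lam) := fun i j hij => by
  simpa [Jmat, one_apply_ne hij, diagonal_apply_ne _ hij] using hA i j hij

theorem rvec_lamOf_nonneg [NeZero n] {u : Fin n → ℝ} (hu : ∀ i, 0 < u i) :
    0 ≤ rvec A Γ a u (lamOf A Γ a u) := fun i => by
  have : lamOf A Γ a u ≤ (calA A Γ a u *ᵥ u) i / u i := ciInf_le (Finite.bddBelow_range _) i
  have := (le_div_iff₀ (hu i)).1 this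
  simp only [rvec, Pi.zero_apply, Pi.sub_apply, Pi.smul_apply, smul_eq_mul]
  linarith

theorem Jmat_mulVec_self {u : Fin n → ℝ} (hu : ∀ i, a i + u i ^ 2 ≠ 0) (lam : ℝ) :
    Jmat A Γ a u lam *ᵥ u = rvec A Γ a u lam + fun i => 2 * Γ * u i ^ 3 / (a i + u i ^ 2) ^ 2 := by
  ext i
  simp [Jmat, rvec, calA, sub_mulVec, add_mulVec, smul_mulVec, mulVec_diagonal]
  field_simp [hu i]
  ring

theorem exists_pos_smul_le_Jmat_mulVec_self [NeZero n] (ha : ∀ i, 0 < a i) (hΓ : 0 < Γ)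
    {m : ℝ} (hm : 0 < m) :
    ∃ c : ℝ, 0 < c ∧ ∀ u : Fin n → ℝ, enorm' u = 1 → (∀ i, m ≤ u i) →
      c • u ≤ Jmat A Γ a u (lamOf A Γ a u) *ᵥ u := by
  have hS : 0 < ∑ i, a i + 1 := by linarith [sum_nonneg fun i (_ : i ∈ univ) => (ha i).le]
  refine ⟨2 * Γ * m ^ 2 / (∑ i, a i + 1) ^ 2, by positivity, fun u hu1 hum i => ?_⟩
  have hu : ∀ i, 0 < u i := fun i => hm.trans_le (hum i)
  have hui : u i ^ 2 ≤ 1 :=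
    Real.sqrt_eq_one.1 hu1 ▸ single_le_sum (f := fun j => u j ^ 2) (fun j _ => sq_nonneg _)
      (mem_univ i)
  have hai : a i ≤ ∑ j, a j := single_le_sum (fun j _ => (ha j).le) (mem_univ i)
  have hai_pos := ha i
  rw [Jmat_mulVec_self A a Γ (fun i => by have := ha i; positivity), Pi.add_apply]
  calc ((2 * Γ * m ^ 2 / (∑ j, a j + 1) ^ 2) • u) i
      = 2 * Γ * m ^ 2 / (∑ j, a j + 1) ^ 2 * u i := rfl
    _ ≤ 2 * Γ * u i ^ 2 / (a i + u i ^ 2) ^ 2 * u i := by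
        gcongr <;> linarith [hum i, hu i]
    _ = 2 * Γ * u i ^ 3 / (a i + u i ^ 2) ^ 2 := by ring
    _ ≤ _ := le_add_of_nonneg_left (rvec_lamOf_nonneg A a Γ hu i)

end Newton

theorem stmt_15_general {n : ℕ} [NeZero n] (A : Matrix (Fin n) (Fin n) ℝ) (a : Fin n → ℝ) (Γ : ℝ)
    (ha : ∀ i, 0 < a i) (hΓ : 0 < Γ)
    (hA : IsNonsingularM A)
    (m : ℝ) (hm0 : 0 < m) :
    ∃ β : ℝ, 0 < β ∧
      ∀ (u : Fin n → ℝ), (∀ i, 0 < u i) → enorm' u = 1 → (∀ i, m ≤ u i) →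
        ∀ (Δ : Fin n → ℝ) (δ : ℝ),
          NewtonSystem A Γ a u (lamOf A Γ a u) Δ δ →
          β * enorm' Δ ≤ δ := by
  obtain ⟨c, hc, hcJ⟩ := exists_pos_smul_le_Jmat_mulVec_self A a Γ ha hΓ hm0
  refine ⟨c * m / (m + 1), by positivity, fun u hu hu1 hum Δ δ ⟨hJΔ, huΔ⟩ => ?_⟩
  refine (isZMatrix_Jmat A a Γ hA.1 u _).mul_enorm'_le_of_mulVec_eq_smul_sub hu1 hm0 hum
    (rvec_lamOf_nonneg A a Γ hu) hc (hcJ u hu1 hum) ?_ ?_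
  · rw [sub_eq_iff_eq_add.1 hJΔ]
    abel
  · simpa [dotProduct_self_eq_enorm'_sq, hu1] using huΔ

theorem stmt_15 {n : ℕ} [NeZero n] (A : Matrix (Fin n) (Fin n) ℝ) (a : Fin n → ℝ) (Γ : ℝ)
    (ha : ∀ i, 0 < a i) (hΓ : 0 < Γ)
    (hA : IsNonsingularM A) (hAirr : IsIrreducibleMat A)
    (m : ℝ) (hm0 : 0 < m) (hm1 : m ≤ 1) :
    ∃ β : ℝ, 0 < β ∧
      ∀ (u : Fin n → ℝ), (∀ i, 0 < u i) → enorm' u = 1 → (∀ i, m ≤ u i) →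
        ∀ (Δ : Fin n → ℝ) (δ : ℝ),
          NewtonSystem A Γ a u (lamOf A Γ a u) Δ δ →
          β * enorm' Δ ≤ δ :=
  stmt_15_general A a Γ ha hΓ hA m hm0
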